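/- arXiv:2012.10368 — 2 statements merged into one kernel-verified Lean document; each statement's English description precedes it below -/
import Mathlib

section
/- Let n ≥ 2 be even and (α,β) ∈ Γ_n with β > n² > α. Then ‖f^n_{α,β}‖² = π/2 − π·n·(√β − n)/(2√β − n)². -/
open MeasureTheory Real Set Filter

noncomputable def L2normSq (f : ℝ → ℝ) : ℝ := ∫ x in Ioo (0:ℝ) π, (f x)^2

noncomputable def L2innerProd (f g : ℝ → ℝ) : ℝ := ∫ x in Ioo (0:ℝ) π, f x * g x

/-- The Fučík spectral curve `Γ_n`. -/
def FucikCurve (n : ℕ) (a b : ℝ) : Prop :=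
  1 < a ∧ 1 < b ∧
  (if Even n
    then ((n : ℝ)/2) * (π / Real.sqrt a) + ((n : ℝ)/2) * (π / Real.sqrt b) = π
    else (((n : ℝ)+1)/2) * (π / Real.sqrt a) + (((n : ℝ)-1)/2) * (π / Real.sqrt b) = π)

/-- The normalized Fučík eigenfunction `f^n_{a,b}`. -/
noncomputable def fucikEf (n : ℕ) (a b : ℝ) (x : ℝ) : ℝ :=
  if n = 1 then Real.sin x
  else
    let l1 := π / Real.sqrt a
    let l2 := π / Real.sqrt b
    let l := l1 + l2
    let y := l * Int.fract (x / l)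
    if (n : ℝ)^2 ≤ a then
      if y < l1 then (Real.sqrt b / Real.sqrt a) * Real.sin (Real.sqrt a * y)
      else - Real.sin (Real.sqrt b * (y - l1))
    else
      if y < l1 then Real.sin (Real.sqrt a * y)
      else - (Real.sqrt a / Real.sqrt b) * Real.sin (Real.sqrt b * (y - l1))

/-- A Fučík system, given by mappings `a b : ℕ → ℝ`. -/
structure FucikSystem (a b : ℕ → ℝ) : Prop where
  one_a : a 1 = 1
  one_b : b 1 = 1
  curve : ∀ n, 2 ≤ n → FucikCurve n (a n) (b n)

/-- `{ψ_n}_{n ≥ 1}` is a Riesz basis of `L²(0,π)`: its span is dense and the two-sided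
frame inequalities hold. -/
def IsRieszBasis (ψ : ℕ → ℝ → ℝ) : Prop :=
  (∀ g : ℝ → ℝ, MeasureTheory.MemLp g 2 (MeasureTheory.volume.restrict (Ioo (0:ℝ) π)) →
    ∀ ε : ℝ, 0 < ε → ∃ (N : ℕ) (s : ℕ → ℝ),
      L2normSq (fun x => g x - ∑ n ∈ Finset.Icc 1 N, s n * ψ n x) < ε) ∧
  (∃ c : ℝ, 0 < c ∧ ∃ C : ℝ, 0 < C ∧ ∀ (N : ℕ) (s : ℕ → ℝ),
      c * ∑ n ∈ Finset.Icc 1 N, (s n)^2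
        ≤ L2normSq (fun x => ∑ n ∈ Finset.Icc 1 N, s n * ψ n x) ∧
      L2normSq (fun x => ∑ n ∈ Finset.Icc 1 N, s n * ψ n x)
        ≤ C * ∑ n ∈ Finset.Icc 1 N, (s n)^2)



/-! When `a < n²` the eigenfunction is periodic with period `l = π/√a + π/√b`, and on one period
its square is `sin² (√a y)` followed by `(a/b) sin² (√b (y - π/√a))`, which integrate to
`π/(2√a)` and `(a/b) π/(2√b)`. For even `n` the curve equation says `(n/2) l = π`, so `(0, π)`
consists of `n/2` full periods; solving the curve equation for `√a = n√b/(2√b - n)` turns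
`n/2` times the one-period integral into the stated closed form. -/

open Function

noncomputable def fucikArch (a b y : ℝ) : ℝ :=
  if y < π / √a then sin (√a * y) else -(√a / √b) * sin (√b * (y - π / √a))

theorem fucikEf_eq_fucikArch {n : ℕ} {a b : ℝ} (hn : n ≠ 1) (ha : a < n ^ 2) (x : ℝ) :
    fucikEf n a b x =
      fucikArch a b ((π / √a + π / √b) * Int.fract (x / (π / √a + π / √b))) := by
  simp only [fucikEf, fucikArch, hn, if_false, not_le.mpr ha]

theorem periodic_comp_mul_fract_div {E : Type*} (F : ℝ → E) {l : ℝ} (hl : l ≠ 0) :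
    Periodic (fun x => F (l * Int.fract (x / l))) l := by
  intro x
  simp only [add_div, div_self hl, Int.fract_add_one]

theorem mul_fract_div_of_mem_Ico {l x : ℝ} (hx : x ∈ Ico 0 l) : l * Int.fract (x / l) = x := by
  have hl : 0 < l := hx.1.trans_lt hx.2
  rw [Int.fract_eq_self.mpr ⟨div_nonneg hx.1 hl.le, (div_lt_one hl).mpr hx.2⟩,
    mul_div_cancel₀ x hl.ne']

theorem intervalIntegral_comp_mul_fract_div {F : ℝ → ℝ} {l : ℝ} (hl : 0 < l)
    (hF : IntervalIntegrable F volume 0 l) (m : ℕ) :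
    ∫ x in (0 : ℝ)..m * l, F (l * Int.fract (x / l)) = m * ∫ y in (0 : ℝ)..l, F y := by
  have hper := periodic_comp_mul_fract_div F hl.ne'
  have heq : EqOn (fun x => F (l * Int.fract (x / l))) F (Ioo 0 l) := fun x hx => by
    simp only [mul_fract_div_of_mem_Ico (Ioo_subset_Ico_self hx)]
  have hint := hper.intervalIntegrable₀ hl.ne'
    ((intervalIntegrable_congr_uIoo (uIoo_of_le hl.le ▸ heq)).mpr hF)
  simpa [intervalIntegral.integral_congr_Ioo_of_le hl.le heq] using
    hper.intervalIntegral_add_zsmul_eq m 0 hint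

theorem integral_sin_mul_sq {c : ℝ} (hc : c ≠ 0) :
    ∫ x in (0 : ℝ)..π / c, sin (c * x) ^ 2 = π / (2 * c) := by
  rw [intervalIntegral.integral_comp_mul_left (fun u => sin u ^ 2) hc, mul_zero,
    mul_div_cancel₀ π hc, integral_sin_sq]
  simp only [sin_zero, sin_pi, zero_mul, sub_zero, zero_add, smul_eq_mul]
  field_simp

section fucikArch

variable {a b : ℝ}

theorem fucikArch_sq_eqOn_Iio :
    EqOn (fun y => fucikArch a b y ^ 2) (fun y => sin (√a * y) ^ 2) (Iio (π / √a)) :=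
  fun y hy => by simp only [fucikArch, if_pos (show y < π / √a from hy)]

theorem fucikArch_sq_eqOn_Ici :
    EqOn (fun y => fucikArch a b y ^ 2)
      (fun y => (√a / √b) ^ 2 * sin (√b * (y - π / √a)) ^ 2) (Ici (π / √a)) :=
  fun y hy => by simp only [fucikArch, if_neg (not_lt.mpr (show π / √a ≤ y from hy))]; ring

theorem intervalIntegrable_fucikArch_sq_left (ha : 0 < a) :
    IntervalIntegrable (fun y => fucikArch a b y ^ 2) volume 0 (π / √a) := by
  have hl : 0 ≤ π / √a := by positivity
  refine (intervalIntegrable_congr_uIoo (fucikArch_sq_eqOn_Iio.mono ?_)).mpr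
    (Continuous.intervalIntegrable (by fun_prop) _ _)
  rw [uIoo_of_le hl]
  exact Ioo_subset_Iio_self

theorem intervalIntegrable_fucikArch_sq_right :
    IntervalIntegrable (fun y => fucikArch a b y ^ 2) volume (π / √a) (π / √a + π / √b) := by
  have hl : π / √a ≤ π / √a + π / √b := le_add_of_nonneg_right (by positivity)
  refine (intervalIntegrable_congr_uIoo (fucikArch_sq_eqOn_Ici.mono ?_)).mpr
    (Continuous.intervalIntegrable (by fun_prop) _ _)
  rw [uIoo_of_le hl]
  exact Ioo_subset_Ioi_self.trans Ioi_subset_Ici_self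

theorem intervalIntegrable_fucikArch_sq (ha : 0 < a) :
    IntervalIntegrable (fun y => fucikArch a b y ^ 2) volume 0 (π / √a + π / √b) :=
  (intervalIntegrable_fucikArch_sq_left ha).trans intervalIntegrable_fucikArch_sq_right

theorem integral_fucikArch_sq (ha : 0 < a) (hb : 0 < b) :
    ∫ y in (0 : ℝ)..π / √a + π / √b, fucikArch a b y ^ 2
      = π / (2 * √a) + (√a / √b) ^ 2 * (π / (2 * √b)) := by
  have hl₁ : 0 ≤ π / √a := by positivity
  have hl₂ : π / √a ≤ π / √a + π / √b := le_add_of_nonneg_right (by positivity)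
  rw [← intervalIntegral.integral_add_adjacent_intervals
      (intervalIntegrable_fucikArch_sq_left ha) intervalIntegrable_fucikArch_sq_right,
    intervalIntegral.integral_congr_Ioo_of_le hl₁ (fucikArch_sq_eqOn_Iio.mono Ioo_subset_Iio_self),
    intervalIntegral.integral_congr_Ioo_of_le hl₂
      (fucikArch_sq_eqOn_Ici.mono (Ioo_subset_Ioi_self.trans Ioi_subset_Ici_self)),
    intervalIntegral.integral_const_mul,
    intervalIntegral.integral_comp_sub_right (fun y => sin (√b * y) ^ 2), sub_self,
    add_sub_cancel_left, integral_sin_mul_sq (Real.sqrt_pos.mpr ha).ne',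
    integral_sin_mul_sq (Real.sqrt_pos.mpr hb).ne']

end fucikArch

theorem L2normSq_fucikEf_of_even {n : ℕ} {a b : ℝ} (hn : Even n) (ha₀ : 0 < a) (hb₀ : 0 < b)
    (ha : a < n ^ 2) (hcurve : n / 2 * (π / √a) + n / 2 * (π / √b) = π) :
    L2normSq (fucikEf n a b) = n / 2 * (π / (2 * √a) + (√a / √b) ^ 2 * (π / (2 * √b))) := by
  obtain ⟨m, rfl⟩ := hn
  have hm : ((m + m : ℕ) : ℝ) / 2 = m := by push_cast; ring
  rw [hm] at hcurve ⊢
  have hπ : m * (π / √a + π / √b) = π := by linear_combination hcurve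
  have hperiods := intervalIntegral_comp_mul_fract_div (by positivity)
    (intervalIntegrable_fucikArch_sq (b := b) ha₀) m
  rw [hπ, integral_fucikArch_sq ha₀ hb₀] at hperiods
  rw [L2normSq, ← integral_Ioc_eq_integral_Ioo, ← intervalIntegral.integral_of_le pi_pos.le,
    ← hperiods]
  simp only [fucikEf_eq_fucikArch (show m + m ≠ 1 by omega) ha]

theorem fucik_even_closed_form {n s t : ℝ} (hs : 0 < s) (ht : 0 < t)
    (hcurve : n / 2 * (π / s) + n / 2 * (π / t) = π) :
    n / 2 * (π / (2 * s) + (s / t) ^ 2 * (π / (2 * t)))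
      = π / 2 - π * n * (t - n) / (2 * t - n) ^ 2 := by
  have hkey : n * (s + t) = 2 * s * t := by
    field_simp at hcurve
    nlinarith [pi_pos]
  have hden : (2 * t - n) * (s + t) = 2 * t ^ 2 := by linear_combination -hkey
  have hpos : 0 < 2 * t - n :=
    pos_of_mul_pos_left (by rw [hden]; positivity) (by positivity)
  have hn : n ≠ 0 := by
    rintro rfl
    nlinarith [mul_pos hs ht]
  have hs_eq : s = n * t / (2 * t - n) := by
    rw [eq_div_iff hpos.ne']
    linear_combination -hkey
  subst hs_eq
  field_simp
  ring

theorem fucik_normSq_even_b_gt_general (n : ℕ) (hne : Even n) (a b : ℝ)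
    (hΓ : FucikCurve n a b) (ha : a < (n:ℝ)^2) :
    L2normSq (fucikEf n a b)
      = π/2 - π*(n:ℝ)*(Real.sqrt b - (n:ℝ))/(2*Real.sqrt b - (n:ℝ))^2 := by
  obtain ⟨ha₁, hb₁, hcurve⟩ := hΓ
  rw [if_pos hne] at hcurve
  rw [L2normSq_fucikEf_of_even hne (by linarith) (by linarith) ha hcurve]
  exact fucik_even_closed_form (by positivity) (by positivity) hcurve

theorem fucik_normSq_even_b_gt (n : ℕ) (hn : 2 ≤ n) (hne : Even n) (a b : ℝ)
    (hΓ : FucikCurve n a b) (hb : (n:ℝ)^2 < b) (ha : a < (n:ℝ)^2) :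
    L2normSq (fucikEf n a b)
      = π/2 - π*(n:ℝ)*(Real.sqrt b - (n:ℝ))/(2*Real.sqrt b - (n:ℝ))^2 :=
  fucik_normSq_even_b_gt_general n hne a b hΓ ha
end

section
/- Let n ≥ 2 be even and (α,β) ∈ Γ_n. Then ‖f^n_{α,β} − φ_n‖² ≤ (4(3+π²)π/9)·(max(√α, √β)/n − 1)². -/
open MeasureTheory Real Set Filter

/-!
For even `n` both `f^n_{α,β}` and `φ_n` have period `l = 2π/n`, and `π` is a whole number
`n/2` of periods, so the squared distance is `n/2` times the one over `[0, l]`. There `f^n_{α,β}`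
consists of a positive hump of frequency `√α` and a negative one of frequency `√β`; reflecting
`x ↦ l - x` turns the latter into a positive hump, and `∫₀^{π/s} (c sin(s x) - sin(n x))²` is
elementary. With `max(√α, √β) = n(1 + ε)` the squared distance becomes an explicit expression in
`ε` and `sin(π ε / (1 + ε))`, which `sin θ ≥ θ - θ³/6` and `π² ≥ 9` bound by the constant times `ε²`.
-/

open intervalIntegral

/-- `f^n_{α,β}` for `p = √α`, `q = √β`, with the amplitudes `c`, `d` of its two humps left free. -/
noncomputable def fucikProfile (p q c d x : ℝ) : ℝ :=
  let l := π / p + π / q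
  let y := l * Int.fract (x / l)
  if y < π / p then c * sin (p * y) else -d * sin (q * (y - π / p))

noncomputable def humpDistSq (n c s : ℝ) : ℝ :=
  ∫ x in (0 : ℝ)..π / s, (c * sin (s * x) - sin (n * x)) ^ 2

/-- The squared distance `‖f^n_{α,β} - φ_n‖²` in terms of `ε = max(√α, √β)/n - 1`. -/
noncomputable def fucikDefect (ε : ℝ) : ℝ :=
  ((1 + 2 * ε)⁻¹ ^ 2 + 1) * π / (4 * (1 + ε)) + π * (1 + 2 * ε) / (2 * (1 + ε))
    - sin (π * ε / (1 + ε)) * ((1 + ε) / ((1 + 2 * ε) * (ε * (2 + ε)))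
      + (1 + ε) * (1 + 2 * ε) / (ε * (2 + 3 * ε)))

theorem L2normSq_eq_intervalIntegral (f : ℝ → ℝ) :
    L2normSq f = ∫ x in (0 : ℝ)..π, f x ^ 2 := by
  rw [L2normSq, integral_of_le pi_pos.le, integral_Ioc_eq_integral_Ioo]

theorem fucikEf_of_sq_le {n : ℕ} {a b : ℝ} (hn : n ≠ 1) (h : (n : ℝ) ^ 2 ≤ a) :
    fucikEf n a b = fucikProfile (√a) (√b) (√b / √a) 1 := by
  funext x
  simp [fucikEf, fucikProfile, hn, h]

theorem fucikEf_of_lt_sq {n : ℕ} {a b : ℝ} (hn : n ≠ 1) (h : a < (n : ℝ) ^ 2) :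
    fucikEf n a b = fucikProfile (√a) (√b) 1 (√a / √b) := by
  funext x
  simp [fucikEf, fucikProfile, hn, not_le.mpr h]

theorem fucikProfile_periodic (p q c d : ℝ) :
    Function.Periodic (fucikProfile p q c d) (π / p + π / q) := by
  intro x
  rcases eq_or_ne (π / p + π / q) 0 with hl | hl
  · rw [hl, add_zero]
  · simp only [fucikProfile, add_div, div_self hl, Int.fract_add_one]

theorem fucikProfile_eq_of_mem_Ico {p q : ℝ} (c d : ℝ) (hp : 0 < p) (hq : 0 < q) {x : ℝ}
    (hx : x ∈ Ico 0 (π / p + π / q)) :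
    fucikProfile p q c d x =
      if x < π / p then c * sin (p * x) else -d * sin (q * (x - π / p)) := by
  have hl : 0 < π / p + π / q := by positivity
  have hy : (π / p + π / q) * Int.fract (x / (π / p + π / q)) = x := by
    rw [Int.fract_eq_self.mpr ⟨div_nonneg hx.1 hl.le, (div_lt_one hl).mpr hx.2⟩,
      mul_div_cancel₀ _ hl.ne']
  simp only [fucikProfile, hy]

theorem integral_fucikProfile_sub_sin_sq {n : ℝ} {k : ℕ} (hk : n = 2 * k) {p q : ℝ} (c d : ℝ)
    (hp : 0 < p) (hq : 0 < q) (hl : n * (π / p + π / q) = 2 * π) :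
    ∫ x in (0 : ℝ)..π, (fucikProfile p q c d x - sin (n * x)) ^ 2
      = n / 2 * (humpDistSq n c p + humpDistSq n d q) := by
  have hper := fucikProfile_periodic p q c d
  set l := π / p + π / q with hl_def
  have hp_le : π / p ≤ l := by linarith [div_pos pi_pos hq]
  set G := fun x => (fucikProfile p q c d x - sin (n * x)) ^ 2 with hG
  have hG_periodic : Function.Periodic G l := by
    intro x
    simp only [hG, hper x, mul_add, hl, sin_add_two_pi]
  have hG_first : EqOn G (fun x => (c * sin (p * x) - sin (n * x)) ^ 2) (Ioo 0 (π / p)) := by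
    intro x hx
    simp only [hG, if_pos hx.2,
      fucikProfile_eq_of_mem_Ico c d hp hq ⟨hx.1.le, hx.2.trans_le hp_le⟩]
  -- reflecting `x ↦ l - x` turns the negative hump into a positive one of frequency `q`
  let hump₂ := fun z => (d * sin (q * z) - sin (n * z)) ^ 2
  have hG_second : EqOn G (fun x => hump₂ (l - x)) (Ioo (π / p) l) := by
    intro x hx
    have hqx : q * (l - x) = π - q * (x - π / p) := by
      simp only [hl_def]; field_simp; ring
    have hnx : n * (l - x) = 2 * π - n * x := by rw [mul_sub, hl]
    simp only [hG, hump₂, hqx, hnx, sin_pi_sub, sin_two_pi_sub, if_neg (not_lt.mpr hx.1.le),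
      fucikProfile_eq_of_mem_Ico c d hp hq ⟨(div_pos pi_pos hp).le.trans hx.1.le, hx.2⟩]
    ring
  have hint : ∀ t₁ t₂, IntervalIntegrable G volume t₁ t₂ := by
    refine hG_periodic.intervalIntegrable₀ (by positivity)
      (IntervalIntegrable.trans (b := π / p) ?_ ?_)
    · refine (Continuous.intervalIntegrable ?_ _ _).congr_uIoo
        (by rw [uIoo_of_le (by positivity)]; exact hG_first.symm)
      fun_prop
    · refine (Continuous.intervalIntegrable ?_ _ _).congr_uIoo
        (by rw [uIoo_of_le hp_le]; exact hG_second.symm)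
      fun_prop
  have hπ : (0 : ℝ) + (k : ℤ) • l = π := by
    rw [zsmul_eq_mul, Int.cast_natCast]
    linear_combination hl / 2 - l * hk / 2
  calc ∫ x in (0 : ℝ)..π, G x
      = k * ((∫ x in (0 : ℝ)..π / p, G x) + ∫ x in π / p..l, G x) := by
        rw [← hπ, hG_periodic.intervalIntegral_add_zsmul_eq k 0 hint, zero_add, zsmul_eq_mul,
          Int.cast_natCast, integral_add_adjacent_intervals (hint _ _) (hint _ _)]
    _ = n / 2 * (humpDistSq n c p + humpDistSq n d q) := by
        rw [integral_congr_Ioo_of_le (by positivity) hG_first,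
          integral_congr_Ioo_of_le hp_le hG_second, integral_comp_sub_left hump₂ l, sub_self,
          hl_def, add_sub_cancel_left]
        change (k : ℝ) * (humpDistSq n c p + humpDistSq n d q) = _
        rw [hk]
        ring

theorem hasDerivAt_sin_const_mul (k x : ℝ) :
    HasDerivAt (fun y => sin (k * y)) (cos (k * x) * k) x := by
  simpa using ((hasDerivAt_id x).const_mul k).sin

theorem humpDistSq_eq {n c s : ℝ} (hn : n ≠ 0) (hs : s ≠ 0) (hsn : s ^ 2 ≠ n ^ 2) :
    humpDistSq n c s = (c ^ 2 + 1) * π / (2 * s) - sin (2 * (n * π / s)) / (4 * n)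
      - 2 * c * s * sin (n * π / s) / (s ^ 2 - n ^ 2) := by
  have hsub : s - n ≠ 0 := fun h => hsn (by rw [sub_eq_zero.mp h])
  have hadd : s + n ≠ 0 := fun h => hsn (by rw [eq_neg_of_add_eq_zero_left h, neg_sq])
  -- product-to-sum formulas give the antiderivative
  let F : ℝ → ℝ := fun x => (c ^ 2 + 1) / 2 * x - c ^ 2 / (4 * s) * sin (2 * s * x)
    - 1 / (4 * n) * sin (2 * n * x) - c / (s - n) * sin ((s - n) * x)
    + c / (s + n) * sin ((s + n) * x)
  have hF : ∀ x, HasDerivAt F ((c * sin (s * x) - sin (n * x)) ^ 2) x := by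
    intro x
    refine (((((hasDerivAt_id x).const_mul ((c ^ 2 + 1) / 2)).sub
      ((hasDerivAt_sin_const_mul (2 * s) x).const_mul (c ^ 2 / (4 * s)))).sub
      ((hasDerivAt_sin_const_mul (2 * n) x).const_mul (1 / (4 * n)))).sub
      ((hasDerivAt_sin_const_mul (s - n) x).const_mul (c / (s - n)))).add
      ((hasDerivAt_sin_const_mul (s + n) x).const_mul (c / (s + n))) |>.congr_deriv ?_
    rw [mul_assoc 2 s, mul_assoc 2 n, cos_two_mul, cos_two_mul, sub_mul s n, add_mul s n,
      cos_sub, cos_add, cos_sq', cos_sq']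
    field_simp
    ring
  rw [humpDistSq, integral_eq_sub_of_hasDerivAt (fun x _ => hF x)
    (Continuous.intervalIntegrable (by fun_prop) _ _)]
  have h₁ : 2 * s * (π / s) = 2 * π := by field_simp
  have h₂ : (s - n) * (π / s) = π - n * π / s := by field_simp
  have h₃ : (s + n) * (π / s) = n * π / s + π := by field_simp; ring
  simp only [F, h₁, h₂, h₃, sin_two_pi, sin_pi_sub, sin_add_pi, mul_zero, sin_zero]
  field_simp
  ring

theorem humpDistSq_add_eq {n ε : ℝ} (hn : 0 < n) (hε : 0 < ε) :
    n / 2 * (humpDistSq n (1 + 2 * ε)⁻¹ (n * (1 + ε))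
        + humpDistSq n 1 (n * (1 + ε) / (1 + 2 * ε))) = fucikDefect ε := by
  have hp₂ : (n * (1 + ε)) ^ 2 - n ^ 2 = n ^ 2 * (ε * (2 + ε)) := by ring
  have hq₂ : (n * (1 + ε) / (1 + 2 * ε)) ^ 2 - n ^ 2
      = -(n ^ 2 * (ε * (2 + 3 * ε)) / (1 + 2 * ε) ^ 2) := by
    field_simp; ring
  have hp_turn : n * π / (n * (1 + ε)) = π - π * ε / (1 + ε) := by field_simp; ring
  have hq_turn : n * π / (n * (1 + ε) / (1 + 2 * ε)) = π * ε / (1 + ε) + π := by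
    field_simp; ring
  have hsin_p : sin (2 * (π - π * ε / (1 + ε))) = -sin (2 * (π * ε / (1 + ε))) := by
    rw [mul_sub, sin_two_pi_sub]
  have hsin_q : sin (2 * (π * ε / (1 + ε) + π)) = sin (2 * (π * ε / (1 + ε))) := by
    rw [mul_add, sin_add_two_pi]
  rw [humpDistSq_eq hn.ne' (by positivity) (sub_ne_zero.mp (by rw [hp₂]; positivity)),
    humpDistSq_eq hn.ne' (by positivity)
      (sub_ne_zero.mp (by rw [hq₂]; exact neg_ne_zero.mpr (by positivity))),
    hp₂, hq₂, hp_turn, hq_turn, hsin_p, hsin_q, sin_pi_sub, sin_add_pi, fucikDefect]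
  field_simp
  ring

theorem fucikDefect_le {ε : ℝ} (hε : 0 < ε) :
    fucikDefect ε ≤ 4 * (3 + π ^ 2) * π / 9 * ε ^ 2 := by
  set θ := π * ε / (1 + ε)
  set C := (1 + ε) / ((1 + 2 * ε) * (ε * (2 + ε))) + (1 + ε) * (1 + 2 * ε) / (ε * (2 + 3 * ε))
  set P := -60 + 504 * ε + 4176 * ε ^ 2 + 11016 * ε ^ 3 + 14508 * ε ^ 4 + 10368 * ε ^ 5
    + 3840 * ε ^ 6 + 576 * ε ^ 7
  set Q := 40 + 432 * ε + 1824 * ε ^ 2 + 3984 * ε ^ 3 + 4920 * ε ^ 4 + 3456 * ε ^ 5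
    + 1280 * ε ^ 6 + 192 * ε ^ 7
  set D := 36 * (1 + ε) ^ 3 * (1 + 2 * ε) ^ 2 * (2 + ε) * (2 + 3 * ε)
  have hsin : (θ - θ ^ 3 / 6) * C ≤ sin θ * C :=
    mul_le_mul_of_nonneg_right (sin_ge_sub_cube (by positivity)) (by positivity)
  have hgap : 4 * (3 + π ^ 2) * π / 9 * ε ^ 2
      - (((1 + 2 * ε)⁻¹ ^ 2 + 1) * π / (4 * (1 + ε)) + π * (1 + 2 * ε) / (2 * (1 + ε))
        - (θ - θ ^ 3 / 6) * C) = π * ε ^ 2 * (P + π ^ 2 * Q) / D := by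
    simp only [θ, C, P, Q, D]
    field_simp
    ring
  have hPQ : 0 ≤ P + π ^ 2 * Q := by
    have hπ : 9 * Q ≤ π ^ 2 * Q :=
      mul_le_mul_of_nonneg_right (by nlinarith [pi_gt_three]) (by positivity)
    have h9 : 0 ≤ P + 9 * Q := by simp only [P, Q]; ring_nf; positivity
    linarith
  have : 0 ≤ π * ε ^ 2 * (P + π ^ 2 * Q) / D := by
    have := pi_pos
    positivity
  rw [fucikDefect]
  linarith

theorem humpDistSq_add_le {n p q : ℝ} (hn : 0 < n) (hp : n ≤ p)
    (hpq : n * (p + q) = 2 * p * q) :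
    n / 2 * (humpDistSq n (q / p) p + humpDistSq n 1 q)
      ≤ 4 * (3 + π ^ 2) * π / 9 * (p / n - 1) ^ 2 := by
  rcases hp.eq_or_lt with rfl | hlt
  · obtain rfl : q = n := by
      have : n * (q - n) = 0 := by linear_combination -hpq
      linarith [(mul_eq_zero.mp this).resolve_left hn.ne']
    simp [humpDistSq, div_self hn.ne']
  · set ε := p / n - 1
    have hε : 0 < ε := by simp only [ε, sub_pos, one_lt_div hn, hlt]
    have hp_eq : p = n * (1 + ε) := by simp only [ε]; field_simp; ring
    have hq_eq : q = n * (1 + ε) / (1 + 2 * ε) := by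
      rw [eq_div_iff (by positivity)]
      rw [hp_eq] at hpq
      nlinarith
    rw [hq_eq, hp_eq, div_div_cancel_left' (by positivity), humpDistSq_add_eq hn hε]
    exact fucikDefect_le hε

theorem fucik_distSq_even_bound_general (n : ℕ) (hne : Even n) (a b : ℝ)
    (hΓ : FucikCurve n a b) :
    L2normSq (fun x => fucikEf n a b x - Real.sin ((n:ℝ)*x))
      ≤ (4*(3+π^2)*π/9) * (max (Real.sqrt a) (Real.sqrt b) / (n:ℝ) - 1)^2 := by
  obtain ⟨ha, hb, hcurve⟩ := hΓ
  rw [if_pos hne] at hcurve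
  obtain ⟨k, hk⟩ := hne
  have hk' : (n : ℝ) = 2 * k := by rw [hk]; push_cast; ring
  have hn1 : n ≠ 1 := by omega
  have hsa : 0 < √a := by positivity
  have hsb : 0 < √b := by positivity
  have hl : n * (π / √a + π / √b) = 2 * π := by linear_combination 2 * hcurve
  have hn : (0 : ℝ) < n := pos_of_mul_pos_left (hl ▸ two_pi_pos) (by positivity)
  have hrel : n * (√a + √b) = 2 * √a * √b := by
    field_simp at hl
    nlinarith [pi_pos]
  rw [L2normSq_eq_intervalIntegral]
  by_cases h : (n : ℝ) ^ 2 ≤ a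
  · have hna : n ≤ √a := Real.le_sqrt_of_sq_le h
    rw [fucikEf_of_sq_le hn1 h, integral_fucikProfile_sub_sin_sq hk' _ _ hsa hsb hl,
      max_eq_left (by nlinarith)]
    exact humpDistSq_add_le hn hna hrel
  · have hnb : n ≤ √b := by nlinarith [Real.sqrt_lt' hn |>.mpr (not_le.mp h)]
    rw [fucikEf_of_lt_sq hn1 (not_le.mp h), integral_fucikProfile_sub_sin_sq hk' _ _ hsa hsb hl,
      max_eq_right (by nlinarith), add_comm]
    exact humpDistSq_add_le hn hnb (by linarith)

theorem fucik_distSq_even_bound (n : ℕ) (hn : 2 ≤ n) (hne : Even n) (a b : ℝ)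
    (hΓ : FucikCurve n a b) :
    L2normSq (fun x => fucikEf n a b x - Real.sin ((n:ℝ)*x))
      ≤ (4*(3+π^2)*π/9) * (max (Real.sqrt a) (Real.sqrt b) / (n:ℝ) - 1)^2 :=
  fucik_distSq_even_bound_general n hne a b hΓ
end
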